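/- arXiv:2203.05504 — 4 statements merged into one kernel-verified Lean document; each statement's English description precedes it below -/
import Mathlib

section
/- Let n ∈ ℕ and let α be a partial map on {0,1,...,n−1} whose domain has at least 2 elements and does not contain 0. Then the following are equivalent: (a) α is a partial isometry of the star graph S_n; (b) α is injective and 0 is not in the image of α; (c) α is an injective partial map on {1,2,...,n−1} (i.e., both its domain and image are contained in {1,...,n−1} and it is injective). -/
namespace DPSPaper

instance instMonoidPFun {V : Type*} : Monoid (V →. V) where
  mul f g := g.comp f
  one := PFun.id V
  mul_assoc a b c := (PFun.comp_assoc c b a).symm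
  one_mul := PFun.comp_id
  mul_one := PFun.id_comp

/-- The geodesic distance in the star graph `S_n` on vertices `{0,1,...,n-1}`. -/
def starDist (n : ℕ) (x y : Fin n) : ℕ :=
  if x = y then 0 else if (x : ℕ) = 0 ∨ (y : ℕ) = 0 then 1 else 2

/-- Injectivity of a partial map. -/
def PInj {n : ℕ} (α : Fin n →. Fin n) : Prop :=
  ∀ ⦃x y a : Fin n⦄, a ∈ α x → a ∈ α y → x = y

/-- `α` is a partial isometry of the star graph `S_n`. -/
def IsStarPI {n : ℕ} (α : Fin n →. Fin n) : Prop :=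
  PInj α ∧ ∀ ⦃x y u v : Fin n⦄, u ∈ α x → v ∈ α y → starDist n u v = starDist n x y

/-- The set of all partial isometries of `S_n`. -/
def DPSset (n : ℕ) : Set (Fin n →. Fin n) := { α | IsStarPI α }

theorem statement1 (n : ℕ) [NeZero n] (α : Fin n →. Fin n)
    (hcard : 2 ≤ α.Dom.ncard) (h0 : (0 : Fin n) ∉ α.Dom) :
    (IsStarPI α ↔ (PInj α ∧ (0 : Fin n) ∉ α.ran)) ∧
    (IsStarPI α ↔
      (PInj α ∧ (∀ x ∈ α.Dom, x ≠ (0 : Fin n)) ∧ ∀ y ∈ α.ran, y ≠ (0 : Fin n))) := by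
  have hdom0 : ∀ x : Fin n, x ∈ α.Dom → x ≠ 0 := by
    rintro x hx rfl; exact h0 hx
  have key : IsStarPI α ↔ (PInj α ∧ (0 : Fin n) ∉ α.ran) := by
    constructor
    · rintro ⟨hinj, hd⟩
      refine ⟨hinj, ?_⟩
      rintro ⟨x, hx⟩
      -- hx : 0 ∈ α x
      have hxd : x ∈ α.Dom := (PFun.mem_dom α _).2 ⟨_, hx⟩
      obtain ⟨a, b, ha, hb, hab⟩ := (Set.one_lt_ncard_iff (Set.toFinite _)).1 hcard
      obtain ⟨y, hy, hyx⟩ : ∃ y ∈ α.Dom, y ≠ x := by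
        rcases eq_or_ne a x with rfl | h
        · exact ⟨b, hb, fun h' => hab h'.symm⟩
        · exact ⟨a, ha, h⟩
      obtain ⟨v, hv⟩ := (PFun.mem_dom α _).1 hy
      have hdist := hd hx hv
      have hx0 : x ≠ 0 := hdom0 x hxd
      have hy0 : y ≠ 0 := hdom0 y hy
      have hv0 : (0 : Fin n) ≠ v := fun h => hyx (hinj hx (h ▸ hv)).symm
      have h2 : starDist n x y = 2 := by
        simp only [starDist, if_neg (fun h : x = y => hyx h.symm)]
        rw [if_neg]
        push_neg
        exact ⟨fun h => hx0 (Fin.ext h), fun h => hy0 (Fin.ext h)⟩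
      have h1 : starDist n (0 : Fin n) v = 1 := by
        simp [starDist, hv0]
      rw [h1, h2] at hdist
      exact absurd hdist (by norm_num)
    · rintro ⟨hinj, hran⟩
      refine ⟨hinj, ?_⟩
      intro x y u v hu hv
      have hx0 : x ≠ 0 := hdom0 x ((PFun.mem_dom α _).2 ⟨_, hu⟩)
      have hy0 : y ≠ 0 := hdom0 y ((PFun.mem_dom α _).2 ⟨_, hv⟩)
      have hu0 : u ≠ 0 := fun h => hran ⟨x, h ▸ hu⟩
      have hv0 : v ≠ 0 := fun h => hran ⟨y, h ▸ hv⟩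
      rcases eq_or_ne x y with rfl | hxy
      · have : u = v := Part.mem_unique hu hv
        simp [starDist, this]
      · have huv : u ≠ v := fun h => hxy (hinj hu (h ▸ hv))
        simp only [starDist, if_neg huv, if_neg hxy]
        rw [if_neg, if_neg]
        · push_neg
          exact ⟨fun h => hx0 (Fin.ext h), fun h => hy0 (Fin.ext h)⟩
        · push_neg
          exact ⟨fun h => hu0 (Fin.ext h), fun h => hv0 (Fin.ext h)⟩
  refine ⟨key, key.trans ?_⟩
  constructor
  · rintro ⟨hinj, hran⟩
    exact ⟨hinj, hdom0, fun y hy h => hran (h ▸ hy)⟩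
  · rintro ⟨hinj, -, hran⟩
    exact ⟨hinj, fun h => hran 0 h rfl⟩

end DPSPaper
end

section
/- Let n ∈ ℕ and let α be a partial map on {0,1,...,n−1} whose domain has at least 3 elements and contains 0. Then the following are equivalent: (a) α is a partial isometry of the star graph S_n; (b) α is injective and 0α = 0; (c) the restriction of α to its domain minus {0} is an injective partial map on {1,2,...,n−1} and 0α = 0. -/
/-!
An injective partial map that fixes `0` sends nonzero vertices to nonzero vertices, and the
distance in `S_n` only depends on which vertices coincide and which are the centre `0`; so it is an
isometry. Conversely, if the domain holds two distinct leaves `x, y`, an isometry keeps their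
images at distance `2`, so both are leaves, and `0α` is at distance `1` from the leaf `xα`, which
forces `0α = 0`.
-/

namespace DPSPaper

/-- The restriction of `α` to its domain minus `{0}`. -/
def delZero {n : ℕ} [NeZero n] (α : Fin n →. Fin n) : Fin n →. Fin n :=
  fun x => if x = 0 then Part.none else α x

lemma mem_delZero_iff {n : ℕ} [NeZero n] {α : Fin n →. Fin n} {x a : Fin n} :
    a ∈ delZero α x ↔ x ≠ 0 ∧ a ∈ α x := by
  unfold delZero
  split_ifs with h <;> simp [h]

lemma ne_zero_of_mem_dom_delZero {n : ℕ} [NeZero n] {α : Fin n →. Fin n} {x : Fin n}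
    (hx : x ∈ (delZero α).Dom) : x ≠ 0 := by
  obtain ⟨a, ha⟩ := (PFun.mem_dom _ x).mp hx
  exact (mem_delZero_iff.mp ha).1

section starDist

variable {n : ℕ} [NeZero n]

lemma starDist_eq (x y : Fin n) :
    starDist n x y = if x = y then 0 else if x = 0 ∨ y = 0 then 1 else 2 := by
  simp only [starDist, Fin.val_eq_zero_iff]

lemma starDist_congr {x y u v : Fin n} (hxy : u = v ↔ x = y) (hx : u = 0 ↔ x = 0)
    (hy : v = 0 ↔ y = 0) : starDist n u v = starDist n x y := by
  simp only [starDist_eq, hxy, hx, hy]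

lemma starDist_eq_one_iff {x y : Fin n} : starDist n x y = 1 ↔ x ≠ y ∧ (x = 0 ∨ y = 0) := by
  rw [starDist_eq]
  split_ifs <;> grind

lemma starDist_eq_two_iff {x y : Fin n} : starDist n x y = 2 ↔ x ≠ y ∧ x ≠ 0 ∧ y ≠ 0 := by
  rw [starDist_eq]
  split_ifs <;> grind

end starDist

lemma _root_.Set.exists_pair_ne_ne_of_three_le_ncard {β : Type*} {s : Set β} (hs : 3 ≤ s.ncard) (c : β) :
    ∃ x ∈ s, ∃ y ∈ s, x ≠ c ∧ y ≠ c ∧ x ≠ y := by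
  have hcard : 1 < (s \ {c}).ncard := by
    have := Set.pred_ncard_le_ncard_sdiff_singleton s c
    omega
  obtain ⟨x, ⟨hxs, hxc⟩, y, ⟨hys, hyc⟩, hxy⟩ :=
    (Set.one_lt_ncard (Set.finite_of_ncard_pos (by omega))).mp hcard
  exact ⟨x, hxs, y, hys, hxc, hyc, hxy⟩

section PInj

variable {n : ℕ} {α : Fin n →. Fin n}

lemma PInj.eq_iff_of_mem (hα : PInj α) {x y u v : Fin n} (hu : u ∈ α x) (hv : v ∈ α y) :
    u = v ↔ x = y := by
  constructor
  · rintro rfl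
    exact hα hu hv
  · rintro rfl
    exact Part.mem_unique hu hv

lemma PInj.eq_zero_iff_of_mem [NeZero n] (hα : PInj α) (h00 : 0 ∈ α 0) {x u : Fin n}
    (hu : u ∈ α x) : u = 0 ↔ x = 0 :=
  hα.eq_iff_of_mem hu h00

lemma PInj.isStarPI [NeZero n] (hα : PInj α) (h00 : 0 ∈ α 0) : IsStarPI α :=
  ⟨hα, fun _ _ _ _ hu hv ↦ starDist_congr (hα.eq_iff_of_mem hu hv)
    (hα.eq_zero_iff_of_mem h00 hu) (hα.eq_zero_iff_of_mem h00 hv)⟩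

lemma IsStarPI.zero_mem_apply_zero [NeZero n] (hα : IsStarPI α) {x y : Fin n} (hx : x ∈ α.Dom)
    (hy : y ∈ α.Dom) (hx0 : x ≠ 0) (hy0 : y ≠ 0) (hxy : x ≠ y) (h0 : 0 ∈ α.Dom) :
    0 ∈ α 0 := by
  obtain ⟨u, hu⟩ := (PFun.mem_dom α x).mp hx
  obtain ⟨v, hv⟩ := (PFun.mem_dom α y).mp hy
  obtain ⟨a, ha⟩ := (PFun.mem_dom α 0).mp h0
  have hu0 : u ≠ 0 :=
    (starDist_eq_two_iff.mp ((hα.2 hu hv).trans (starDist_eq_two_iff.mpr ⟨hxy, hx0, hy0⟩))).2.1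
  have hau : starDist n a u = 1 := (hα.2 ha hu).trans (starDist_eq_one_iff.mpr ⟨hx0.symm, .inl rfl⟩)
  obtain ⟨-, ha0 | hu0'⟩ := starDist_eq_one_iff.mp hau
  · exact ha0 ▸ ha
  · exact absurd hu0' hu0

lemma isStarPI_iff_pInj_and_zero_mem [NeZero n] (hcard : 3 ≤ α.Dom.ncard) (h0 : 0 ∈ α.Dom) :
    IsStarPI α ↔ PInj α ∧ 0 ∈ α 0 := by
  refine ⟨fun hα ↦ ⟨hα.1, ?_⟩, fun ⟨hinj, h00⟩ ↦ hinj.isStarPI h00⟩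
  obtain ⟨x, hx, y, hy, hx0, hy0, hxy⟩ := Set.exists_pair_ne_ne_of_three_le_ncard hcard 0
  exact hα.zero_mem_apply_zero hx hy hx0 hy0 hxy h0

lemma pInj_and_zero_mem_iff [NeZero n] :
    PInj α ∧ 0 ∈ α 0 ↔
      PInj (delZero α) ∧ (∀ x ∈ (delZero α).Dom, x ≠ 0) ∧ (∀ y ∈ (delZero α).ran, y ≠ 0) ∧
        0 ∈ α 0 := by
  constructor
  · rintro ⟨hinj, h00⟩
    refine ⟨fun x y a hx hy ↦ hinj (mem_delZero_iff.mp hx).2 (mem_delZero_iff.mp hy).2,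
      fun x ↦ ne_zero_of_mem_dom_delZero, ?_, h00⟩
    rintro b ⟨x, hx⟩ rfl
    obtain ⟨hx0, hx⟩ := mem_delZero_iff.mp hx
    exact hx0 (hinj hx h00)
  · rintro ⟨hinj, -, hran, h00⟩
    refine ⟨fun x y b hx hy ↦ ?_, h00⟩
    have image_ne_zero : ∀ {z}, z ≠ 0 → b ∈ α z → b ≠ 0 :=
      fun hz hb ↦ hran b ⟨_, mem_delZero_iff.mpr ⟨hz, hb⟩⟩
    by_cases hx0 : x = 0 <;> by_cases hy0 : y = 0
    · rw [hx0, hy0]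
    · exact absurd (Part.mem_unique (hx0 ▸ hx) h00) (image_ne_zero hy0 hy)
    · exact absurd (Part.mem_unique (hy0 ▸ hy) h00) (image_ne_zero hx0 hx)
    · exact hinj (mem_delZero_iff.mpr ⟨hx0, hx⟩) (mem_delZero_iff.mpr ⟨hy0, hy⟩)

end PInj

theorem statement3 (n : ℕ) [NeZero n] (α : Fin n →. Fin n)
    (hcard : 3 ≤ α.Dom.ncard) (h0 : (0 : Fin n) ∈ α.Dom) :
    (IsStarPI α ↔ (PInj α ∧ (0 : Fin n) ∈ α 0)) ∧
    (IsStarPI α ↔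
      (PInj (delZero α) ∧ (∀ x ∈ (delZero α).Dom, x ≠ (0 : Fin n)) ∧
        (∀ y ∈ (delZero α).ran, y ≠ (0 : Fin n)) ∧ (0 : Fin n) ∈ α 0)) := by
  have key := isStarPI_iff_pInj_and_zero_mem hcard h0
  exact ⟨key, key.trans pInj_and_zero_mem_iff⟩

end DPSPaper
end

section
/- For all n ∈ ℕ with n ≥ 1, the number of partial isometries of the star graph S_n is |DPS_n| = 1 + n² + 2·∑_{k=1}^{n−1} C(n−1,k)²·k!, where C(n−1,k) denotes the binomial coefficient. -/
/-!
Let `0` be the center of the star and `1, …, m` its leaves, `n = m + 1`. A partial isometry that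
neither sends a leaf to the center nor the center to a leaf is a partial injection of the leaves,
extended either by `0 ↦ 0` or by leaving `0` undefined; there are `2 ∑ₖ C(m,k)² k!` of these.
Otherwise the center is moved: some leaf `b` goes to `0`, or `0` goes to a leaf `a`. No other
leaf can then be in the domain: its image would need distance `2` from the center, or distance
`1` from the leaf `a`, i.e. be the center, whose preimage is `b`. So the map is `0 ↦ a, b ↦ 0`
with `a, b` optional and not both absent, which gives `(m + 1)² - 1` more.
-/

namespace DPSPaper

open Finset

section PartialInjection

variable {α β : Type*} [Fintype α] [DecidableEq α] [Fintype β] [DecidableEq β]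

def IsPartialInj (g : α → Option β) : Prop :=
  ∀ ⦃x y : α⦄ ⦃b : β⦄, g x = some b → g y = some b → x = y

instance (g : α → Option β) : Decidable (IsPartialInj g) := by
  unfold IsPartialInj; infer_instance

def domain (g : α → Option β) : Finset α := {x | (g x).isSome}

def extendByNone (s : Finset α) (e : s ↪ β) (x : α) : Option β :=
  if h : x ∈ s then some (e ⟨x, h⟩) else none

lemma card_isPartialInj_domain_eq (s : Finset α) :
    #{g : α → Option β | IsPartialInj g ∧ domain g = s} = (Fintype.card β).descFactorial #s := by
  rw [← Fintype.card_coe s, ← Fintype.card_embedding_eq, ← Finset.card_univ]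
  symm
  refine card_bij (fun e _ => extendByNone s e) ?_ ?_ ?_
  · intro e _
    simp only [mem_filter, mem_univ, true_and]
    refine ⟨fun x y b hx hy => ?_, ?_⟩
    · unfold extendByNone at hx hy
      split_ifs at hx hy with hxs hys
      simp only [Option.some_inj] at hx hy
      exact congrArg Subtype.val (e.injective (hx.trans hy.symm))
    · ext x
      by_cases hx : x ∈ s <;> simp [domain, extendByNone, hx]
  · intro e _ e' _ h
    ext ⟨x, hx⟩
    simpa [extendByNone, hx] using congrFun h x
  · intro g hg
    simp only [mem_filter, mem_univ, true_and] at hg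
    obtain ⟨hinj, rfl⟩ := hg
    have hsome : ∀ x : domain g, (g x).isSome := fun x => (mem_filter.1 x.2).2
    refine ⟨⟨fun x => (g x).get (hsome x), fun x y hxy => Subtype.ext ?_⟩, mem_univ _, ?_⟩
    · have hy := (Option.some_get (hsome y)).symm
      rw [← show (g x).get (hsome x) = (g y).get (hsome y) from hxy] at hy
      exact hinj (Option.some_get _).symm hy
    · funext x
      by_cases hx : x ∈ domain g
      · rw [extendByNone, dif_pos hx]
        exact Option.some_get _
      · rw [extendByNone, dif_neg hx]
        exact (by simpa [domain] using hx : g x = none).symm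

lemma card_isPartialInj :
    #{g : α → Option β | IsPartialInj g} =
      ∑ k ∈ range (Fintype.card α + 1),
        (Fintype.card α).choose k * (Fintype.card β).descFactorial k := by
  rw [card_eq_sum_card_fiberwise (f := domain) (t := univ.powerset) (by simp)]
  simp only [filter_filter, card_isPartialInj_domain_eq]
  rw [sum_powerset_apply_card (fun k => (Fintype.card β).descFactorial k), card_univ]
  simp only [smul_eq_mul]

end PartialInjection

section StarDist

lemma starDist_eq_zero_iff {n : ℕ} {x y : Fin n} : starDist n x y = 0 ↔ x = y := by
  unfold starDist; split_ifs <;> simp_all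

@[simp] lemma starDist_self {n : ℕ} (x : Fin n) : starDist n x x = 0 := starDist_eq_zero_iff.2 rfl

variable {m : ℕ}

@[simp] lemma starDist_zero_succ (i : Fin m) : starDist (m + 1) 0 i.succ = 1 := by
  simp [starDist, (Fin.succ_ne_zero i).symm]

@[simp] lemma starDist_succ_zero (i : Fin m) : starDist (m + 1) i.succ 0 = 1 := by
  simp [starDist, Fin.succ_ne_zero i]

@[simp] lemma starDist_succ_succ (i j : Fin m) :
    starDist (m + 1) i.succ j.succ = if i = j then 0 else 2 := by
  simp [starDist, Fin.succ_inj]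

end StarDist

def IsStarIso (n : ℕ) (g : Fin n → Option (Fin n)) : Prop :=
  ∀ ⦃x y u v : Fin n⦄, g x = some u → g y = some v → starDist n u v = starDist n x y

instance (n : ℕ) (g : Fin n → Option (Fin n)) : Decidable (IsStarIso n g) := by
  unfold IsStarIso; infer_instance

lemma IsStarIso.isPartialInj {n : ℕ} {g : Fin n → Option (Fin n)} (hg : IsStarIso n g) :
    IsPartialInj g := fun _ _ u hx hy =>
  starDist_eq_zero_iff.1 ((hg hx hy).symm.trans (starDist_self u))

lemma isStarPI_ofOption_iff {n : ℕ} (g : Fin n → Option (Fin n)) :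
    IsStarPI (fun x => Part.ofOption (g x)) ↔ IsStarIso n g := by
  simp only [IsStarPI, PInj, Part.mem_ofOption, Option.mem_def]
  exact ⟨fun h => h.2, fun hg => ⟨hg.isPartialInj, hg⟩⟩

lemma ncard_DPSset (n : ℕ) : (DPSset n).ncard = #{g : Fin n → Option (Fin n) | IsStarIso n g} := by
  let e : (Fin n → Option (Fin n)) ≃ (Fin n →. Fin n) :=
    Equiv.piCongrRight fun _ => Part.equivOption.symm
  rw [← Set.ncard_preimage_of_injective_subset_range e.injective (by simp), ← Set.ncard_coe_finset]
  congr 1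
  ext g
  simp only [Set.mem_preimage, DPSset, Set.mem_ofPred_eq, coe_filter, mem_univ, true_and]
  exact isStarPI_ofOption_iff g

section Star

variable {m : ℕ}

def ofLeafMap (z : Option (Fin (m + 1))) (h : Fin m → Option (Fin m)) :
    Fin (m + 1) → Option (Fin (m + 1)) :=
  Fin.cons z fun i => (h i).map Fin.succ

def moveCenter (a b : Option (Fin m)) : Fin (m + 1) → Option (Fin (m + 1)) :=
  Fin.cons (a.map Fin.succ) fun i => if b = some i then some 0 else none

@[simp] lemma ofLeafMap_zero (z : Option (Fin (m + 1))) (h : Fin m → Option (Fin m)) :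
    ofLeafMap z h 0 = z := rfl

@[simp] lemma ofLeafMap_succ (z : Option (Fin (m + 1))) (h : Fin m → Option (Fin m)) (i : Fin m) :
    ofLeafMap z h i.succ = (h i).map Fin.succ := rfl

@[simp] lemma moveCenter_zero (a b : Option (Fin m)) : moveCenter a b 0 = a.map Fin.succ := rfl

@[simp] lemma moveCenter_succ (a b : Option (Fin m)) (i : Fin m) :
    moveCenter a b i.succ = if b = some i then some 0 else none := rfl

lemma IsPartialInj.isStarIso {g : Fin (m + 1) → Option (Fin (m + 1))} (hg : IsPartialInj g)
    (hc : ∀ ⦃x u⦄, g x = some u → (u = 0 ↔ x = 0)) : IsStarIso (m + 1) g := by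
  intro x y u v hx hy
  have huv : u = v ↔ x = y :=
    ⟨fun h => hg hx (h ▸ hy), fun h => Option.some_inj.1 (hx.symm.trans (h ▸ hy))⟩
  simp only [starDist, huv, Fin.val_eq_zero_iff, hc hx, hc hy]

lemma isPartialInj_ofLeafMap {z : Option (Fin (m + 1))} {h : Fin m → Option (Fin m)}
    (hz : z = none ∨ z = some 0) (hh : IsPartialInj h) : IsPartialInj (ofLeafMap z h) := by
  intro x y u hx hy
  cases x using Fin.cases <;> cases y using Fin.cases
  · rfl
  all_goals simp only [ofLeafMap_zero, ofLeafMap_succ, Option.map_eq_some_iff] at hx hy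
  · obtain ⟨w, -, rfl⟩ := hy
    rcases hz with rfl | rfl <;> simp_all [(Fin.succ_ne_zero w).symm]
  · obtain ⟨w, -, rfl⟩ := hx
    rcases hz with rfl | rfl <;> simp_all [(Fin.succ_ne_zero w).symm]
  · obtain ⟨w, hi, rfl⟩ := hx
    obtain ⟨w', hj, hw⟩ := hy
    rw [hh hi (Fin.succ_injective m hw ▸ hj)]

lemma isStarIso_ofLeafMap {z : Option (Fin (m + 1))} {h : Fin m → Option (Fin m)}
    (hz : z = none ∨ z = some 0) (hh : IsPartialInj h) : IsStarIso (m + 1) (ofLeafMap z h) := by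
  refine (isPartialInj_ofLeafMap hz hh).isStarIso fun x u hx => ?_
  cases x using Fin.cases
  · rcases hz with rfl | rfl <;> simp_all [eq_comm]
  · simp only [ofLeafMap_succ, Option.map_eq_some_iff] at hx
    obtain ⟨w, -, rfl⟩ := hx
    simp [Fin.succ_ne_zero]

lemma isStarIso_moveCenter (a b : Option (Fin m)) : IsStarIso (m + 1) (moveCenter a b) := by
  intro x y u v hx hy
  cases x using Fin.cases <;> cases y using Fin.cases <;>
    simp only [moveCenter_zero, moveCenter_succ, Option.map_eq_some_iff,
      Option.ite_none_right_eq_some, Option.some_inj] at hx hy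
  · obtain ⟨w, rfl, rfl⟩ := hx
    obtain ⟨w', hw, rfl⟩ := hy
    simp_all
  · obtain ⟨w, rfl, rfl⟩ := hx
    obtain ⟨rfl, rfl⟩ := hy
    simp
  · obtain ⟨rfl, rfl⟩ := hx
    obtain ⟨w, rfl, rfl⟩ := hy
    simp
  · obtain ⟨rfl, rfl⟩ := hx
    obtain ⟨hij, rfl⟩ := hy
    simp_all

def leafPart (g : Fin (m + 1) → Option (Fin (m + 1))) (i : Fin m) : Option (Fin m) :=
  (g i.succ).bind (finSuccEquiv m)

lemma leafPart_eq_some {g : Fin (m + 1) → Option (Fin (m + 1))} {i w : Fin m} :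
    leafPart g i = some w ↔ g i.succ = some w.succ := by
  unfold leafPart
  rcases g i.succ with _ | u
  · simp
  · cases u using Fin.cases <;> simp [eq_comm]

lemma isPartialInj_leafPart {g : Fin (m + 1) → Option (Fin (m + 1))} (hg : IsPartialInj g) :
    IsPartialInj (leafPart g) := fun _ _ _ hi hj =>
  Fin.succ_injective m (hg (leafPart_eq_some.1 hi) (leafPart_eq_some.1 hj))

lemma ofLeafMap_leafPart {g : Fin (m + 1) → Option (Fin (m + 1))}
    (hc : ∀ i : Fin m, g i.succ ≠ some 0) :
    ofLeafMap (g 0) (leafPart g) = g := by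
  funext x
  cases x using Fin.cases with
  | zero => rfl
  | succ i =>
    specialize hc i
    rcases hgi : g i.succ with _ | u
    · simp [leafPart, hgi]
    · cases u using Fin.cases
      · exact absurd hgi hc
      · simp [leafPart, hgi]

lemma exists_map_succ_eq {o : Option (Fin (m + 1))} (ho : o ≠ some 0) :
    ∃ a : Option (Fin m), o = a.map Fin.succ := by
  rcases o with _ | u
  · exact ⟨none, rfl⟩
  · cases u using Fin.cases
    · exact absurd rfl ho
    · exact ⟨some _, rfl⟩

lemma eq_moveCenter {g : Fin (m + 1) → Option (Fin (m + 1))} {a b : Option (Fin m)}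
    (hg : IsStarIso (m + 1) g) (ha : g 0 = a.map Fin.succ)
    (hb : ∀ l, g l.succ = some 0 ↔ b = some l) (hab : (a, b) ≠ (none, none)) :
    g = moveCenter a b := by
  funext x
  cases x using Fin.cases with
  | zero => exact ha
  | succ j =>
    rw [moveCenter_succ]
    split_ifs with hbj
    · exact (hb j).2 hbj
    rcases hgj : g j.succ with _ | v
    · rfl
    cases v using Fin.cases with
    | zero => exact absurd ((hb j).1 hgj) hbj
    | succ w' =>
      exfalso
      rcases a with _ | w
      · obtain ⟨l, rfl⟩ := Option.ne_none_iff_exists'.1 (by simpa using hab)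
        have hlj : l ≠ j := fun h => hbj (h ▸ rfl)
        simpa [hlj] using hg ((hb l).2 rfl) hgj
      · have := hg ha hgj
        simp only [starDist_succ_succ, starDist_zero_succ] at this
        split_ifs at this
        omega

lemma isStarIso_iff {g : Fin (m + 1) → Option (Fin (m + 1))} :
    IsStarIso (m + 1) g ↔
      (∃ z h, (z = none ∨ z = some 0) ∧ IsPartialInj h ∧ ofLeafMap z h = g) ∨
        ∃ a b, (a, b) ≠ (none, none) ∧ moveCenter a b = g := by
  refine ⟨fun hg => ?_, ?_⟩
  · have hinj := hg.isPartialInj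
    by_cases hl : ∃ l : Fin m, g l.succ = some 0
    · obtain ⟨l, hl⟩ := hl
      obtain ⟨a, ha⟩ := exists_map_succ_eq fun h0 => Fin.succ_ne_zero l (hinj hl h0)
      have hb (l' : Fin m) : g l'.succ = some 0 ↔ some l = some l' :=
        ⟨fun h => by rw [Fin.succ_injective m (hinj hl h)], by rintro ⟨⟩; exact hl⟩
      exact Or.inr ⟨a, some l, by simp, (eq_moveCenter hg ha hb (by simp)).symm⟩
    simp only [not_exists] at hl
    by_cases h0 : g 0 = none ∨ g 0 = some 0
    · exact Or.inl ⟨g 0, leafPart g, h0, isPartialInj_leafPart hinj, ofLeafMap_leafPart hl⟩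
    · obtain ⟨a, ha⟩ := exists_map_succ_eq (not_or.1 h0).2
      have hb (l : Fin m) : g l.succ = some 0 ↔ none = some l := by simp [hl l]
      have hab : (a, (none : Option (Fin m))) ≠ (none, none) := by
        rintro ⟨⟩
        exact h0 (Or.inl ha)
      exact Or.inr ⟨a, none, hab, (eq_moveCenter hg ha hb hab).symm⟩
  · rintro (⟨z, h, hz, hh, rfl⟩ | ⟨a, b, -, rfl⟩)
    exacts [isStarIso_ofLeafMap hz hh, isStarIso_moveCenter a b]

end Star

section Count

variable {m : ℕ}

lemma ofLeafMap_injective2 : Function.Injective2 (ofLeafMap (m := m)) := by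
  intro z z' h h' heq
  obtain ⟨rfl, hh⟩ := Fin.cons_injective2 heq
  exact ⟨rfl, funext fun i => Option.map_injective (Fin.succ_injective m) (congrFun hh i)⟩

lemma moveCenter_injective2 : Function.Injective2 (moveCenter (m := m)) := by
  intro a a' b b' heq
  refine ⟨Option.map_injective (Fin.succ_injective m) (congrFun heq 0), Option.ext fun i => ?_⟩
  have := congrFun heq i.succ
  simp only [moveCenter_succ] at this
  split_ifs at this <;> simp_all

lemma ofLeafMap_ne_moveCenter {z : Option (Fin (m + 1))} {h : Fin m → Option (Fin m)}
    {a b : Option (Fin m)} (hz : z = none ∨ z = some 0) (hab : (a, b) ≠ (none, none)) :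
    ofLeafMap z h ≠ moveCenter a b := by
  intro heq
  have h0 := congrFun heq 0
  rcases hz with rfl | rfl
  · obtain rfl : a = none := by simpa [eq_comm] using h0
    obtain ⟨l, rfl⟩ := Option.ne_none_iff_exists'.1 (by simpa using hab)
    simpa using congrFun heq l.succ
  · simp [eq_comm] at h0

lemma card_isStarIso (m : ℕ) :
    #{g : Fin (m + 1) → Option (Fin (m + 1)) | IsStarIso (m + 1) g} =
      2 * #{h : Fin m → Option (Fin m) | IsPartialInj h} + ((m + 1) ^ 2 - 1) := by
  have hsplit : ({g | IsStarIso (m + 1) g} : Finset (Fin (m + 1) → Option (Fin (m + 1)))) =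
      (({none, some 0} : Finset _) ×ˢ ({h | IsPartialInj h} : Finset _)).image
          (Function.uncurry ofLeafMap) ∪
        (univ.erase (none, none)).image (Function.uncurry moveCenter) := by
    ext g
    simp [isStarIso_iff, or_assoc]
  rw [hsplit, card_union_of_disjoint, card_image_of_injective _ ofLeafMap_injective2.uncurry,
    card_image_of_injective _ moveCenter_injective2.uncurry, card_product, card_pair (by simp),
    card_erase_of_mem (mem_univ _), card_univ]
  · simp [sq]
  · simp only [disjoint_left, mem_image, mem_product, mem_insert, mem_singleton, mem_filter,
      mem_erase, Prod.exists, Function.uncurry_apply_pair]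
    rintro _ ⟨z, h, ⟨hz, -⟩, rfl⟩ ⟨a, b, ⟨hab, -⟩, heq⟩
    exact ofLeafMap_ne_moveCenter hz hab heq.symm

end Count

lemma sum_choose_mul_descFactorial (m : ℕ) :
    ∑ k ∈ range (m + 1), m.choose k * m.descFactorial k =
      1 + ∑ k ∈ Icc 1 m, m.choose k ^ 2 * k.factorial := by
  rw [range_eq_Ico, sum_eq_sum_Ico_succ_bot (by omega), zero_add, Ico_add_one_right_eq_Icc,
    Nat.choose_zero_right, Nat.descFactorial_zero]
  congr 1
  refine sum_congr rfl fun k _ => ?_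
  rw [Nat.descFactorial_eq_factorial_mul_choose]
  ring

theorem statement6 (n : ℕ) (hn : 1 ≤ n) :
    (DPSset n).ncard =
      1 + n ^ 2 + 2 * ∑ k ∈ Finset.Icc 1 (n - 1), (Nat.choose (n - 1) k) ^ 2 * k.factorial := by
  obtain ⟨m, rfl⟩ : ∃ m, n = m + 1 := ⟨n - 1, by omega⟩
  have hpos : 1 ≤ (m + 1) ^ 2 := Nat.one_le_pow _ _ m.succ_pos
  rw [ncard_DPSset, card_isStarIso, card_isPartialInj, Fintype.card_fin,
    sum_choose_mul_descFactorial, Nat.add_sub_cancel]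
  omega

end DPSPaper
end

section
/- The rank of the monoid DPS_3 is 3; that is, the minimum cardinality of a subset X ⊆ DPS_3 such that the submonoid of DPS_3 generated by X equals DPS_3 is 3. -/
set_option maxRecDepth 100000
set_option maxHeartbeats 4000000


namespace DPSPaper

/-! ### A finite model: total functions into `Option` -/

abbrev M3 := Fin 3 → Option (Fin 3)

instance instMonoidM3 : Monoid M3 where
  mul f g x := (f x).bind g
  one := some
  mul_assoc f g h := funext fun x => Option.bind_assoc (f x) g h
  one_mul f := rfl
  mul_one f := funext fun x => by cases h : f x <;> simp [HMul.hMul, Mul.mul, h] <;> rfl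

lemma M3.mul_def (f g : M3) (x : Fin 3) : (f * g) x = (f x).bind g := rfl

def toPFun (f : M3) : Fin 3 →. Fin 3 := fun x => Part.ofOption (f x)

lemma ofOption_bind (o : Option (Fin 3)) (g : M3) :
    Part.ofOption (o.bind g) = (Part.ofOption o).bind fun y => Part.ofOption (g y) := by
  cases o <;> simp

def toHom : M3 →* (Fin 3 →. Fin 3) where
  toFun := toPFun
  map_one' := rfl
  map_mul' f g := funext fun x => ofOption_bind (f x) g

lemma mem_toPFun {f : M3} {x a : Fin 3} : a ∈ toPFun f x ↔ f x = some a := by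
  simp [toPFun, Part.mem_ofOption, Option.mem_def]

lemma toPFun_injective : Function.Injective toPFun := by
  intro f g h
  funext x
  cases hg : g x with
  | some a =>
      have ha : a ∈ toPFun f x := by rw [h]; exact mem_toPFun.mpr hg
      exact mem_toPFun.mp ha
  | none =>
      cases hf : f x with
      | none => rfl
      | some a =>
          have ha : a ∈ toPFun g x := by rw [← h]; exact mem_toPFun.mpr hf
          rw [mem_toPFun.mp ha] at hg
          cases hg

lemma toPFun_surjective : Function.Surjective toPFun := by
  classical
  intro α
  refine ⟨fun x => if h : (α x).Dom then some ((α x).get h) else none, funext fun x => ?_⟩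
  by_cases h : (α x).Dom
  · simp only [toPFun, h, dif_pos]
    exact (Part.some_get h)
  · simp only [toPFun, h, dif_neg, not_false_iff]
    exact (Part.eq_none_iff'.mpr h).symm

def optPI (f : M3) : Prop :=
  ∀ x y a b : Fin 3, f x = some a → f y = some b →
    (a = b → x = y) ∧ starDist 3 a b = starDist 3 x y

instance : DecidablePred optPI := fun f => by unfold optPI; infer_instance

def Dfin : Finset M3 := Finset.univ.filter optPI

lemma isStarPI_iff (f : M3) : IsStarPI (toPFun f) ↔ optPI f := by
  constructor
  · rintro ⟨hinj, hd⟩ x y a b hx hy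
    refine ⟨fun hab => ?_, hd (mem_toPFun.mpr hx) (mem_toPFun.mpr hy)⟩
    subst hab
    exact hinj (mem_toPFun.mpr hx) (mem_toPFun.mpr hy)
  · intro h
    constructor
    · intro x y a hx hy
      exact (h x y a a (mem_toPFun.mp hx) (mem_toPFun.mp hy)).1 rfl
    · intro x y u v hx hy
      exact (h x y u v (mem_toPFun.mp hx) (mem_toPFun.mp hy)).2

lemma DPSset_eq : DPSset 3 = toPFun '' ↑Dfin := by
  ext α
  simp only [DPSset, Set.mem_setOf_eq, Set.mem_image, Finset.mem_coe, Dfin, Finset.mem_filter,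
    Finset.mem_univ, true_and]
  constructor
  · intro h
    obtain ⟨f, rfl⟩ := toPFun_surjective α
    exact ⟨f, (isStarPI_iff f).1 h, rfl⟩
  · rintro ⟨f, hf, rfl⟩
    exact (isStarPI_iff f).2 hf

/-! ### Upper bound: three generators -/

def σf : M3 := ![some 0, some 2, some 1]
def g2 : M3 := ![none, some 1, some 2]
def g3 : M3 := ![some 1, none, some 0]

def Gfin : Finset M3 := {σf, g2, g3}

def step (X S : Finset M3) : Finset M3 := insert 1 (X ∪ (S ×ˢ S).image fun p => p.1 * p.2)

def satur (X : Finset M3) : Finset M3 := (step X)^[3] X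

lemma satur_subset_closure (X : Finset M3) :
    ∀ m ∈ satur X, m ∈ Submonoid.closure (X : Set M3) := by
  have key : ∀ n, ∀ m ∈ (step X)^[n] X, m ∈ Submonoid.closure (X : Set M3) := by
    intro n
    induction n with
    | zero => exact fun m hm => Submonoid.subset_closure hm
    | succ n ih =>
      rw [Function.iterate_succ_apply']
      intro m hm
      rcases Finset.mem_insert.1 hm with rfl | hm
      · exact Submonoid.one_mem _
      rcases Finset.mem_union.1 hm with h | h
      · exact Submonoid.subset_closure h
      obtain ⟨p, hp, rfl⟩ := Finset.mem_image.1 h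
      obtain ⟨h1, h2⟩ := Finset.mem_product.1 hp
      exact mul_mem (ih _ h1) (ih _ h2)
  exact key 3

def DfinM : Submonoid M3 where
  carrier := ↑Dfin
  one_mem' := by decide
  mul_mem' := by
    have h : ∀ a ∈ Dfin, ∀ b ∈ Dfin, a * b ∈ Dfin := by decide
    intro a b ha hb
    exact h a ha b hb

set_option maxHeartbeats 4000000 in
set_option maxRecDepth 100000 in
lemma Dfin_subset_satur : Dfin ⊆ satur Gfin := by decide

lemma closureG : (Submonoid.closure (↑Gfin : Set M3) : Set M3) = ↑Dfin := by
  apply subset_antisymm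
  · have h : Submonoid.closure (↑Gfin : Set M3) ≤ DfinM := by
      apply Submonoid.closure_le.2
      intro g hg
      have : ∀ g ∈ Gfin, g ∈ Dfin := by decide
      exact this g hg
    exact h
  · intro m hm
    exact satur_subset_closure Gfin m (Dfin_subset_satur hm)

/-! ### Lower bound: eight proper submonoids covering all pairs -/

def Wlist : Fin 8 → Finset M3 := ![
  {![some 0, some 1, some 2], ![some 0, none, none], ![some 1, none, none], ![some 2, some 0, none], ![some 2, none, none], ![none, some 0, none], ![none, some 1, some 2], ![none, some 1, none], ![none, some 2, some 1], ![none, some 2, none], ![none, none, some 0], ![none, none, some 1], ![none, none, some 2], ![none, none, none]},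
  {![some 0, some 1, some 2], ![some 0, some 2, some 1], ![none, some 1, some 2], ![none, some 2, some 1]},
  {![some 0, some 1, some 2], ![some 0, some 1, none], ![some 0, none, none], ![some 1, some 0, none], ![some 1, none, none], ![some 2, none, none], ![none, some 0, none], ![none, some 1, some 2], ![none, some 1, none], ![none, some 2, some 1], ![none, some 2, none], ![none, none, some 0], ![none, none, some 1], ![none, none, some 2], ![none, none, none]},
  {![some 0, some 1, some 2], ![some 0, some 2, none], ![some 0, none, none], ![none, some 1, some 2], ![none, some 1, none], ![none, some 2, some 1], ![none, some 2, none], ![none, none, some 1], ![none, none, some 2], ![none, none, none]},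
  {![some 0, some 1, some 2], ![some 0, none, some 2], ![some 0, none, none], ![some 1, none, none], ![some 2, none, some 0], ![some 2, none, none], ![none, some 0, none], ![none, some 1, some 2], ![none, some 1, none], ![none, some 2, some 1], ![none, some 2, none], ![none, none, some 0], ![none, none, some 1], ![none, none, some 2], ![none, none, none]},
  {![some 0, some 1, some 2], ![some 0, some 1, none], ![some 0, some 2, some 1], ![some 0, some 2, none], ![some 0, none, some 1], ![some 0, none, some 2], ![some 0, none, none], ![some 1, some 0, none], ![some 1, none, some 0], ![some 1, none, none], ![some 2, some 0, none], ![some 2, none, some 0], ![some 2, none, none], ![none, some 0, none], ![none, some 1, none], ![none, some 2, none], ![none, none, some 0], ![none, none, some 1], ![none, none, some 2], ![none, none, none]},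
  {![some 0, some 1, some 2], ![some 0, none, some 1], ![some 0, none, none], ![none, some 1, some 2], ![none, some 1, none], ![none, some 2, some 1], ![none, some 2, none], ![none, none, some 1], ![none, none, some 2], ![none, none, none]},
  {![some 0, some 1, some 2], ![some 0, none, none], ![some 1, none, some 0], ![some 1, none, none], ![some 2, none, none], ![none, some 0, none], ![none, some 1, some 2], ![none, some 1, none], ![none, some 2, some 1], ![none, some 2, none], ![none, none, some 0], ![none, none, some 1], ![none, none, some 2], ![none, none, none]}
]

def WM (i : Fin 8) : Submonoid M3 where
  carrier := ↑(Wlist i)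
  one_mem' := by
    have h : ∀ i : Fin 8, (1 : M3) ∈ Wlist i := by decide
    exact h i
  mul_mem' := by
    have h : ∀ i : Fin 8, ∀ a ∈ Wlist i, ∀ b ∈ Wlist i, a * b ∈ Wlist i := by decide
    intro a b ha hb
    exact h i a ha b hb

lemma W_ne : ∀ i : Fin 8, ¬ (Dfin ⊆ Wlist i) := by decide

lemma W_cover : ∀ a ∈ Dfin, ∀ b ∈ Dfin, ∃ i : Fin 8, a ∈ Wlist i ∧ b ∈ Wlist i := by decide

lemma sub_pair {α : Type*} [DecidableEq α] (F : Finset α) (h : F.card ≤ 2) (d : α) :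
    ∃ a ∈ insert d F, ∃ b ∈ insert d F, F ⊆ {a, b} := by
  rcases F.eq_empty_or_nonempty with rfl | ⟨a, ha⟩
  · exact ⟨d, by simp, d, by simp, by simp⟩
  refine ⟨a, Finset.mem_insert_of_mem ha, ?_⟩
  have h1 : (F.erase a).card ≤ 1 := by
    have := Finset.card_erase_of_mem ha
    omega
  rcases (F.erase a).eq_empty_or_nonempty with he | ⟨b, hb⟩
  · refine ⟨a, Finset.mem_insert_of_mem ha, fun x hx => ?_⟩
    by_cases hxa : x = a
    · simp [hxa]
    · exfalso
      have hxe : x ∈ F.erase a := Finset.mem_erase.2 ⟨hxa, hx⟩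
      rw [he] at hxe
      exact Finset.notMem_empty x hxe
  · refine ⟨b, Finset.mem_insert_of_mem (Finset.mem_of_mem_erase hb), fun x hx => ?_⟩
    by_cases hxa : x = a
    · simp [hxa]
    · have hxb : x = b :=
        Finset.card_le_one.1 h1 x (Finset.mem_erase.2 ⟨hxa, hx⟩) b hb
      simp [hxb]

/-! ### Main theorem -/

theorem statement10 :
    IsLeast { k : ℕ | ∃ X : Set (Fin 3 →. Fin 3), X ⊆ DPSset 3 ∧
      (↑(Submonoid.closure X) : Set (Fin 3 →. Fin 3)) = DPSset 3 ∧ X.ncard = k } 3 := by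
  constructor
  · -- membership: the three generators
    refine ⟨toPFun '' ↑Gfin, ?_, ?_, ?_⟩
    · rw [DPSset_eq]
      apply Set.image_mono
      intro g hg
      have : ∀ g ∈ Gfin, g ∈ Dfin := by decide
      exact this g hg
    · have h1 : Submonoid.closure (toPFun '' ↑Gfin) = (Submonoid.closure (↑Gfin : Set M3)).map toHom := by
        rw [MonoidHom.map_mclosure]
        rfl
      rw [h1, Submonoid.coe_map]
      show toPFun '' (Submonoid.closure (↑Gfin : Set M3) : Set M3) = DPSset 3
      rw [closureG, DPSset_eq]
    · rw [Set.ncard_image_of_injective _ toPFun_injective, Set.ncard_coe_finset]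
      decide
  · -- lower bound
    rintro k ⟨X, hXD, hcl, rfl⟩
    by_contra hlt
    push_neg at hlt
    have hk2 : X.ncard ≤ 2 := by omega
    -- pull back to the finite model
    set Y : Set M3 := toPFun ⁻¹' X with hY
    have hXY : toPFun '' Y = X := Set.image_preimage_eq X toPFun_surjective
    have hYD : Y ⊆ ↑Dfin := by
      intro y hy
      have : toPFun y ∈ DPSset 3 := hXD hy
      rw [DPSset_eq] at this
      obtain ⟨f, hf, hfy⟩ := this
      rwa [← toPFun_injective hfy]
    have hYfin : Y.Finite := Set.Finite.subset (Dfin.finite_toSet) hYD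
    have hYcard : Y.ncard ≤ 2 := by
      rw [← hXY, Set.ncard_image_of_injective _ toPFun_injective] at hk2
      exact hk2
    -- closure of Y is everything
    have hclY : (Submonoid.closure Y : Set M3) = ↑Dfin := by
      have h1 : Submonoid.closure X = (Submonoid.closure Y).map toHom := by
        rw [MonoidHom.map_mclosure]
        show Submonoid.closure X = Submonoid.closure (toPFun '' Y)
        rw [hXY]
      have h2 : toPFun '' (Submonoid.closure Y : Set M3) = toPFun '' ↑Dfin := by
        have := hcl
        rw [h1, Submonoid.coe_map] at this
        rw [← DPSset_eq]
        exact this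
      exact Set.image_eq_image toPFun_injective |>.1 h2
    -- Y is contained in a pair {a, b} from Dfin
    set F : Finset M3 := hYfin.toFinset with hF
    have hFcard : F.card ≤ 2 := by
      rw [Set.ncard_eq_toFinset_card Y hYfin] at hYcard
      exact hYcard
    obtain ⟨a, ha, b, hb, hsub⟩ := sub_pair F hFcard 1
    have hmemD : ∀ x ∈ insert (1 : M3) F, x ∈ Dfin := by
      intro x hx
      rcases Finset.mem_insert.1 hx with rfl | hx
      · have : (1 : M3) ∈ Dfin := by decide
        exact this
      · exact hYD (hYfin.mem_toFinset.1 hx)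
    obtain ⟨i, hai, hbi⟩ := W_cover a (hmemD a ha) b (hmemD b hb)
    have hYW : Y ⊆ (WM i : Set M3) := by
      intro y hy
      have hyF : y ∈ F := hYfin.mem_toFinset.2 hy
      rcases Finset.mem_insert.1 (hsub hyF) with rfl | hy'
      · exact hai
      · rw [Finset.mem_singleton.1 hy']
        exact hbi
    have hle : Submonoid.closure Y ≤ WM i := Submonoid.closure_le.2 hYW
    apply W_ne i
    intro d hd
    have : d ∈ Submonoid.closure Y := by
      rw [← SetLike.mem_coe, hclY]
      exact hd
    exact hle this

end DPSPaper
end
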